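/- arXiv:1402.5759 — 7 statements merged into one kernel-verified Lean document; each statement's English description precedes it below -/
import Mathlib

section
/- For any dynamical system Σ = (ℕ, W, B) and l ∈ ℕ, the behavior B^{l↑} := { w | ∀ t, w|[t,t+l] ∈ B|[t,t+l] } is the smallest behavior among all l-complete behaviors containing B: if B' ⊇ B and B' is l-complete, then B^{l↑} ⊆ B'. In particular, the strongest l-complete approximation is unique. -/
def res {W : Type*} (w : ℕ → W) (t l : ℕ) : Fin (l + 1) → W := fun i => w (t + i)

def resSet {W : Type*} (B : Set (ℕ → W)) (t l : ℕ) : Set (Fin (l + 1) → W) :=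
  {s | ∃ v ∈ B, s = res v t l}

def lComplete {W : Type*} (B : Set (ℕ → W)) (l : ℕ) : Prop :=
  ∀ w : ℕ → W, w ∈ B ↔ ∀ t : ℕ, res w t l ∈ resSet B t l

def strongestLBeh {W : Type*} (B : Set (ℕ → W)) (l : ℕ) : Set (ℕ → W) :=
  {w | ∀ t : ℕ, res w t l ∈ resSet B t l}

/-- `C` is a strongest l-complete approximation of `B`. -/
def isStrongestLApprox {W : Type*} (B C : Set (ℕ → W)) (l : ℕ) : Prop :=
  B ⊆ C ∧ lComplete C l ∧ ∀ B' : Set (ℕ → W), B ⊆ B' → lComplete B' l → C ⊆ B'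

theorem stmt_6 {W : Type*} (B : Set (ℕ → W)) (l : ℕ) :
    (∀ B' : Set (ℕ → W), B ⊆ B' → lComplete B' l → strongestLBeh B l ⊆ B') ∧
    (∀ C₁ C₂ : Set (ℕ → W),
      isStrongestLApprox B C₁ l → isStrongestLApprox B C₂ l → C₁ = C₂) := by
  constructor
  · intro B' hBB' hlc w hw
    rw [hlc w]
    intro t
    obtain ⟨v, hv, he⟩ := hw t
    exact ⟨v, hBB' hv, he⟩
  · intro C₁ C₂ ⟨h1B, h1c, h1m⟩ ⟨h2B, h2c, h2m⟩
    exact Set.Subset.antisymm (h1m C₂ h2B h2c) (h2m C₁ h1B h1c)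
end

section
/- Every l-complete dynamical system Σ = (ℕ, W, B) has memory span l, i.e., for all w₁, w₂ ∈ B and t ∈ ℕ, if w₁|[t,t+l-1] = w₂|[t,t+l-1] then the concatenation w₃, defined by w₃(s) = w₁(s) for s < t and w₃(s) = w₂(s) for s ≥ t, belongs to B. -/
theorem stmt_7 {W : Type*} (B : Set (ℕ → W)) (l : ℕ)
    (hlc : lComplete B l) :
    ∀ w₁ ∈ B, ∀ w₂ ∈ B, ∀ t : ℕ,
      (∀ i : Fin l, w₁ (t + i) = w₂ (t + i)) →
      (fun s => if s < t then w₁ s else w₂ s) ∈ B := by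
  intro w₁ h₁ w₂ h₂ t hag
  apply (hlc _).mpr
  intro t'
  by_cases h : t' < t
  · refine ⟨w₁, h₁, ?_⟩
    funext i
    simp only [res]
    by_cases hs : t' + (i : ℕ) < t
    · simp [hs]
    · simp only [if_neg hs]
      push_neg at hs
      have hlt : t' + (i : ℕ) - t < l := by
        have hi : (i : ℕ) ≤ l := Nat.lt_succ_iff.mp i.isLt
        omega
      have := hag ⟨t' + (i : ℕ) - t, hlt⟩
      simpa [Nat.add_sub_cancel' hs] using this.symm
  · refine ⟨w₂, h₂, ?_⟩
    funext i
    simp only [res]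
    have : ¬ t' + (i : ℕ) < t := by omega
    simp [this]
end

section
/- Let Σ = (ℕ, W, B) be an l-complete dynamical system. Define the state space X as the union of all B|[0,r-1] for r ∈ [0,l-1] (strings of length < l, including the empty string) together with all B|[t,t+l-1] for t ∈ ℕ (strings of length l), and define B_S as the set of pairs (w,x) with w ∈ B and x(t) = w|[0,t-1] for t < l and x(t) = w|[t-l,t-1] for t ≥ l. Then Σ_S = (ℕ, W, X, B_S) satisfies the synchronous state property: for all (w₁,x₁),(w₂,x₂) ∈ B_S and t ∈ ℕ with x₁(t) = x₂(t), the concatenation at time t of (w₁,x₁) and (w₂,x₂) belongs to B_S; moreover the projection of B_S to the W-component equals B. -/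
/-- The state at time `t`: the last `min t l` symbols of `w` before time `t`, as a string. -/
def stateOf {W : Type*} (w : ℕ → W) (l t : ℕ) : List W :=
  if t < l then List.ofFn (fun i : Fin t => w i)
  else List.ofFn (fun i : Fin l => w (t - l + i))

/-- The full behavior of the canonical state space representation. -/
def stateBeh {W : Type*} (B : Set (ℕ → W)) (l : ℕ) : Set (ℕ → W × List W) :=
  {v | (fun t => (v t).1) ∈ B ∧ ∀ t : ℕ, (v t).2 = stateOf (fun s => (v s).1) l t}

/-!
A state is the window of the last `min t l` symbols before `t`, so two trajectories with the same
state at `t` agree on `[t - l, t)`. Every window `[s, s + l]` of the concatenation then lies either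
entirely before `t`, or entirely in `[t - l, ∞)` where the concatenation coincides with the second
trajectory; hence it is a window of `B`, and `l`-completeness puts the concatenation in `B`. The
state component is handled the same way: the window defining the state at `u ≥ t` also lies in
`[t - l, ∞)`. Conversely every `w ∈ B` lifts to `B_S` by attaching its own states.
-/

lemma stateOf_eq_stateOf_iff {W : Type*} {w₁ w₂ : ℕ → W} {l t : ℕ} :
    stateOf w₁ l t = stateOf w₂ l t ↔ ∀ j, j < t → t ≤ j + l → w₁ j = w₂ j := by
  unfold stateOf
  split_ifs with ht
  · refine ⟨fun h j hj _ => congrFun (List.ofFn_injective h) ⟨j, hj⟩, fun h => ?_⟩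
    exact congrArg List.ofFn (funext fun i => h i i.isLt (by omega))
  · refine ⟨fun h j hj hjl => ?_, fun h => ?_⟩
    · have := congrFun (List.ofFn_injective h) ⟨j - (t - l), by omega⟩
      simpa [show t - l + (j - (t - l)) = j by omega] using this
    · exact congrArg List.ofFn (funext fun i => h (t - l + i) (by omega) (by omega))

lemma lComplete.ite_lt_mem {W : Type*} {B : Set (ℕ → W)} {l : ℕ} (hB : lComplete B l)
    {w₁ w₂ : ℕ → W} (hw₁ : w₁ ∈ B) (hw₂ : w₂ ∈ B) {t : ℕ}
    (hagree : ∀ j, j < t → t ≤ j + l → w₁ j = w₂ j) :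
    (fun s => if s < t then w₁ s else w₂ s) ∈ B := by
  refine (hB _).2 fun s => ?_
  by_cases hs : s + l < t
  · refine ⟨w₁, hw₁, funext fun i => ?_⟩
    simp [res, show s + (i : ℕ) < t by omega]
  · refine ⟨w₂, hw₂, funext fun i => ?_⟩
    by_cases hi : s + (i : ℕ) < t
    · simpa [res, hi] using hagree _ hi (by omega)
    · simp [res, hi]

lemma stateOf_ite_lt_of_lt {W : Type*} (w₁ w₂ : ℕ → W) (l : ℕ) {t u : ℕ} (hu : u < t) :
    stateOf (fun s => if s < t then w₁ s else w₂ s) l u = stateOf w₁ l u :=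
  stateOf_eq_stateOf_iff.2 fun _ hj _ => if_pos (hj.trans hu)

lemma stateOf_ite_lt_of_le {W : Type*} {w₁ w₂ : ℕ → W} {l t u : ℕ}
    (hagree : ∀ j, j < t → t ≤ j + l → w₁ j = w₂ j) (hu : t ≤ u) :
    stateOf (fun s => if s < t then w₁ s else w₂ s) l u = stateOf w₂ l u := by
  refine stateOf_eq_stateOf_iff.2 fun j _ hjl => ?_
  by_cases hj : j < t
  · simpa [hj] using hagree j hj (by omega)
  · simp [hj]

lemma fst_ite_lt {α β : Type*} (v₁ v₂ : ℕ → α × β) (t : ℕ) :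
    (fun s => (if s < t then v₁ s else v₂ s).1) =
      fun s => if s < t then (v₁ s).1 else (v₂ s).1 := by
  funext s
  by_cases h : s < t <;> simp [h]

lemma stateBeh_ite_lt_mem {W : Type*} {B : Set (ℕ → W)} {l : ℕ} (hB : lComplete B l)
    {v₁ v₂ : ℕ → W × List W} (hv₁ : v₁ ∈ stateBeh B l) (hv₂ : v₂ ∈ stateBeh B l) {t : ℕ}
    (hstate : (v₁ t).2 = (v₂ t).2) :
    (fun s => if s < t then v₁ s else v₂ s) ∈ stateBeh B l := by
  obtain ⟨hw₁, hx₁⟩ := hv₁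
  obtain ⟨hw₂, hx₂⟩ := hv₂
  have hagree := stateOf_eq_stateOf_iff.1 ((hx₁ t).symm.trans (hstate.trans (hx₂ t)))
  refine ⟨fst_ite_lt v₁ v₂ t ▸ hB.ite_lt_mem hw₁ hw₂ hagree, fun u => ?_⟩
  dsimp only
  rw [fst_ite_lt]
  by_cases hu : u < t
  · rw [stateOf_ite_lt_of_lt _ _ l hu, if_pos hu, hx₁]
  · rw [stateOf_ite_lt_of_le hagree (not_lt.1 hu), if_neg hu, hx₂]

lemma fst_image_stateBeh {W : Type*} (B : Set (ℕ → W)) (l : ℕ) :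
    {w | ∃ v ∈ stateBeh B l, w = fun t => (v t).1} = B := by
  ext w
  refine ⟨?_, fun hw => ⟨fun t => (w t, stateOf w l t), ⟨hw, fun _ => rfl⟩, rfl⟩⟩
  rintro ⟨v, ⟨hv, _⟩, rfl⟩
  exact hv

theorem stmt_9 {W : Type*} (B : Set (ℕ → W)) (l : ℕ)
    (hlc : lComplete B l) :
    (∀ v₁ ∈ stateBeh B l, ∀ v₂ ∈ stateBeh B l, ∀ t : ℕ,
        (v₁ t).2 = (v₂ t).2 →
        (fun s => if s < t then v₁ s else v₂ s) ∈ stateBeh B l) ∧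
    {w | ∃ v ∈ stateBeh B l, w = fun t => (v t).1} = B :=
  ⟨fun _ hv₁ _ hv₂ _ hstate => stateBeh_ite_lt_mem hlc hv₁ hv₂ hstate, fst_image_stateBeh B l⟩
end

section
/- A complete dynamical system with asynchronous memory span l is asynchronously l-complete. -/
/-- Completeness (ω-closedness form). -/
def complete {W : Type*} (B : Set (ℕ → W)) : Prop :=
  ∀ w : ℕ → W, w ∈ B ↔
    ∀ τ : ℕ, ∃ v ∈ B, (fun i : Fin (τ + 1) => w i) = fun i : Fin (τ + 1) => v i

/-- Asynchronous memory span `l`. -/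
def asyncMemorySpan {W : Type*} (B : Set (ℕ → W)) (l : ℕ) : Prop :=
  ∀ w₁ ∈ B, ∀ w₂ ∈ B, ∀ t₁ t₂ : ℕ,
    (∀ i : Fin l, w₁ (t₁ + i) = w₂ (t₂ + i)) →
    (fun s => if s < t₁ then w₁ s else w₂ (s - t₁ + t₂)) ∈ B

/-- Asynchronous l-completeness. -/
def asyncLComplete {W : Type*} (B : Set (ℕ → W)) (l : ℕ) : Prop :=
  ∀ w : ℕ → W, w ∈ B ↔
    (res w 0 l ∈ resSet B 0 l ∧ ∀ t : ℕ, res w t l ∈ ⋃ t' : ℕ, resSet B t' l)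

theorem stmt_15 {W : Type*} (B : Set (ℕ → W)) (l : ℕ)
    (hc : complete B) (hm : asyncMemorySpan B l) :
    asyncLComplete B l := by
  intro w
  constructor
  · intro hw
    exact ⟨⟨w, hw, rfl⟩, fun t => Set.mem_iUnion.2 ⟨t, w, hw, rfl⟩⟩
  · rintro ⟨⟨v0, hv0, hres0⟩, hall⟩
    have key : ∀ n : ℕ, ∃ v ∈ B, ∀ s ≤ n + l, v s = w s := by
      intro n
      induction n with
      | zero =>
        refine ⟨v0, hv0, fun s hs => ?_⟩
        have h := congrFun hres0 ⟨s, by omega⟩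
        simp only [res, Nat.zero_add] at h
        exact h.symm
      | succ n ih =>
        obtain ⟨v, hv, hagree⟩ := ih
        obtain ⟨t', v', hv'B, hres⟩ := Set.mem_iUnion.1 (hall (n + 1))
        have hag : ∀ i : Fin l, v (n + 1 + i) = v' (t' + i) := by
          intro i
          have h1 : v (n + 1 + i) = w (n + 1 + i) := hagree _ (by omega)
          have h2 := congrFun hres ⟨i.val, by omega⟩
          simp only [res] at h2
          rw [h1, h2]
        refine ⟨_, hm v hv v' hv'B (n + 1) t' hag, fun s hs => ?_⟩
        by_cases hsn : s < n + 1
        · simp only [hsn, if_pos]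
          exact hagree s (by omega)
        · simp only [hsn, if_neg, if_false]
          have h2 := congrFun hres ⟨s - (n + 1), by omega⟩
          simp only [res] at h2
          have he : n + 1 + (s - (n + 1)) = s := by omega
          rw [he] at h2
          rw [Nat.add_comm t'] at h2
          exact h2.symm
    rw [hc]
    intro τ
    obtain ⟨v, hv, hagree⟩ := key τ
    exact ⟨v, hv, funext fun i => hagree i (by omega) |>.symm⟩
end

section
/- For any dynamical system Σ = (ℕ, W, B) and l ∈ ℕ, the behavior B^{l↑a} := { w | w|[0,l] ∈ B|[0,l] ∧ ∀ t ∈ ℕ, w|[t,t+l] ∈ ⋃_{t'∈ℕ} B|[t',t'+l] } defines the unique strongest asynchronous l-complete approximation of Σ: (i) B ⊆ B^{l↑a}, (ii) B^{l↑a} is asynchronously l-complete, and (iii) for every asynchronously l-complete behavior B' with B ⊆ B', one has B^{l↑a} ⊆ B'. -/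
/-- The behavior of the strongest asynchronous l-complete approximation. -/
def strongestAsyncLBeh {W : Type*} (B : Set (ℕ → W)) (l : ℕ) : Set (ℕ → W) :=
  {w | res w 0 l ∈ resSet B 0 l ∧ ∀ t : ℕ, res w t l ∈ ⋃ t' : ℕ, resSet B t' l}

theorem stmt_16 {W : Type*} (B : Set (ℕ → W)) (l : ℕ) :
    B ⊆ strongestAsyncLBeh B l ∧
    asyncLComplete (strongestAsyncLBeh B l) l ∧
    (∀ B' : Set (ℕ → W), B ⊆ B' → asyncLComplete B' l →
      strongestAsyncLBeh B l ⊆ B') := by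
  refine ⟨?_, ?_, ?_⟩
  · intro w hw
    exact ⟨⟨w, hw, rfl⟩, fun t => Set.mem_iUnion.2 ⟨t, w, hw, rfl⟩⟩
  · intro w
    constructor
    · intro hw
      exact ⟨⟨w, hw, rfl⟩, fun t => Set.mem_iUnion.2 ⟨t, w, hw, rfl⟩⟩
    · rintro ⟨⟨v, hv, hv0⟩, h2⟩
      refine ⟨hv0 ▸ hv.1, fun t => ?_⟩
      obtain ⟨t', u, hu, hres⟩ := Set.mem_iUnion.1 (h2 t)
      exact hres ▸ hu.2 t'
  · intro B' hBB' hB' w ⟨⟨v, hv, hv0⟩, h2⟩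
    refine (hB' w).2 ⟨hv0 ▸ ⟨v, hBB' hv, rfl⟩, fun t => ?_⟩
    obtain ⟨t', u, hu, hres⟩ := Set.mem_iUnion.1 (h2 t)
    exact Set.mem_iUnion.2 ⟨t', u, hBB' hu, hres⟩
end

section
/- If Σ = (ℕ, W, B) is strictly time invariant (σB = B), then for every l ∈ ℕ its strongest synchronous l-complete approximation and its strongest asynchronous l-complete approximation are identical, i.e., { w | ∀ t, w|[t,t+l] ∈ B|[t,t+l] } = { w | w|[0,l] ∈ B|[0,l] ∧ ∀ t, w|[t,t+l] ∈ ⋃_{t'} B|[t',t'+l] }. -/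
def shift {W : Type*} (w : ℕ → W) : ℕ → W := fun k => w (k + 1)

lemma resSet_succ {W : Type*} (B : Set (ℕ → W)) (l : ℕ)
    (hsti : shift '' B = B) (t : ℕ) : resSet B (t + 1) l = resSet B t l := by
  ext s
  constructor
  · rintro ⟨v, hv, rfl⟩
    have hsv : shift v ∈ B := by rw [← hsti]; exact ⟨v, hv, rfl⟩
    exact ⟨shift v, hsv, by funext i; simp [res, shift]; ring_nf⟩
  · rintro ⟨v, hv, rfl⟩
    have : v ∈ shift '' B := by rw [hsti]; exact hv
    obtain ⟨u, hu, rfl⟩ := this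
    exact ⟨u, hu, by funext i; simp [res, shift]; ring_nf⟩

lemma resSet_eq {W : Type*} (B : Set (ℕ → W)) (l : ℕ)
    (hsti : shift '' B = B) (t : ℕ) : resSet B t l = resSet B 0 l := by
  induction t with
  | zero => rfl
  | succ n ih => rw [resSet_succ B l hsti, ih]

theorem stmt_17 {W : Type*} (B : Set (ℕ → W)) (l : ℕ)
    (hsti : shift '' B = B) :
    {w : ℕ → W | ∀ t : ℕ, res w t l ∈ resSet B t l} =
      {w : ℕ → W | res w 0 l ∈ resSet B 0 l ∧
        ∀ t : ℕ, res w t l ∈ ⋃ t' : ℕ, resSet B t' l} := by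
  ext w
  simp only [Set.mem_setOf_eq, Set.mem_iUnion]
  constructor
  · intro h
    exact ⟨h 0, fun t => ⟨t, h t⟩⟩
  · rintro ⟨h0, h⟩ t
    obtain ⟨t', ht'⟩ := h t
    rw [resSet_eq B l hsti t'] at ht'
    rw [resSet_eq B l hsti t]
    exact ht'
end

section
/- For any behavior B ⊆ (ℕ → W) and natural numbers r ≤ l, the strongest l-complete approximation is contained in the strongest r-complete approximation: { w | ∀ t, w|[t,t+l] ∈ B|[t,t+l] } ⊆ { w | ∀ t, w|[t,t+r] ∈ B|[t,t+r] }. Moreover, if B is r-complete with r ≤ l, then B equals its strongest l-complete approximation, i.e., B = { w | ∀ t, w|[t,t+l] ∈ B|[t,t+l] }. -/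
lemma sub_aux {W : Type*} (B : Set (ℕ → W)) (r l : ℕ) (hrl : r ≤ l) :
    strongestLBeh B l ⊆ strongestLBeh B r := by
  intro w hw t
  obtain ⟨v, hv, hres⟩ := hw t
  refine ⟨v, hv, ?_⟩
  funext i
  have := congrFun hres ⟨i, by omega⟩
  simpa [res] using this

theorem stmt_18 {W : Type*} (B : Set (ℕ → W)) (r l : ℕ) (hrl : r ≤ l) :
    strongestLBeh B l ⊆ strongestLBeh B r ∧
    (lComplete B r → B = strongestLBeh B l) := by
  refine ⟨sub_aux B r l hrl, fun hc => ?_⟩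
  apply Set.Subset.antisymm
  · intro w hw t
    exact ⟨w, hw, rfl⟩
  · intro w hw
    exact (hc w).mpr (sub_aux B r l hrl hw)
end
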